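/- Let r ≥ 3, let t ≥ 3, and let (x_1,y_1), …, (x_t,y_t) be primitive solutions of 0 < |F(x,y)| ≤ h, pairwise distinct up to sign, all related to the same r-th root of unity ω, ordered so that ζ_1 ≥ ζ_2 ≥ … ≥ ζ_t. Assume that either (a) γ = conj(α) and δ = conj(β) (the case D < 0), or (b) u_i, v_i are nonzero and μ_i is real for every 1 ≤ i ≤ t (the case D > 0). If |j| > 2^{1+(r−2)/(r(R−1))}·h^{2/r}, where R = (r−1)^{t−2}, then ζ_{t−1} < 1/2. -/

import Mathlib

/-!
Suppose `ζ ≥ 1/2` for the solution of index `t - 2` (counting from 0); by monotonicity the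
same holds for the solutions of indices `0, …, t - 2`, so each of them has `Z ^ r ≤ 2h`. For two distinct
primitive solutions, `u₀ v₁ - u₁ v₀ = j (x₀ y₁ - x₁ y₀)` with a nonzero integer determinant,
so `|j| ≤ |u₀ v₁ - u₁ v₀|`. Write `θ` for the argument of `(u / v) ω⁻¹`, so `|θ| ≤ π / r`.

If `v = ū`, then `(u / v) ω⁻¹ = e^{iθ}` and `ζ = |e^{irθ} - 1| ≥ 2r|θ|/π` (Jordan), while the
chord bound gives `|j| ≤ Z₀ Z₁ (|θ₀| + |θ₁|)`. For consecutive solutions this yields the gap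
principle `(r|j|/π) Z_k^{r-1} ≤ h Z_{k+1}`, and for the first two `r|j|/π ≤ 2 Z₀ Z₁`.
Iterating the gap principle gives `(r|j|/π)^e Z₀^R ≤ h^e Z_{t-2}` with
`e = 1 + (r-1) + ⋯ + (r-1)^{t-3}`, i.e. `e (r-2) + 1 = R`; combined with `Z₁^r, Z_{t-2}^r ≤ 2h`
this bounds `|j|` by exactly the stated constant.

If `μ` is real, then `rθ` is a multiple of `π` in `(-π, π]`, so `θ ∈ {0, π/r}`. The products
`u₀ v₁` and `u₁ v₀` then make an angle of at most `π/3`, whence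
`|j| ≤ |u₀ v₁ - u₁ v₀| ≤ max(|u₀ v₁|, |u₁ v₀|) ≤ Z₀ Z₁ ≤ (2h)^{2/r}`.
-/

open Complex

noncomputable section

/-- The linear form `αx + βy` evaluated at an integer pair. -/
def lin (α β : ℂ) (x y : ℤ) : ℂ := α * (x : ℂ) + β * (y : ℂ)

/-- The diagonalizable binary form `F(x,y) = (αx+βy)^r − (γx+δy)^r`. -/
def form (α β γ δ : ℂ) (r : ℕ) (x y : ℤ) : ℂ := lin α β x y ^ r - lin γ δ x y ^ r

/-- `Z(x,y) = max(|u|,|v|)`. -/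
def Zmax (α β γ δ : ℂ) (x y : ℤ) : ℝ :=
  max ‖lin α β x y‖ ‖lin γ δ x y‖

/-- `ζ(x,y) = |F(x,y)| / Z(x,y)^r`. -/
def zetaF (α β γ δ : ℂ) (r : ℕ) (x y : ℤ) : ℝ :=
  ‖form α β γ δ r x y‖ / Zmax α β γ δ x y ^ r

/-- `μ(x,y) = v^r / u^r`. -/
def muF (α β γ δ : ℂ) (r : ℕ) (x y : ℤ) : ℂ :=
  lin γ δ x y ^ r / lin α β x y ^ r

/-- `F` has integer coefficients: each coefficient
`binom(r,k)·(α^k β^{r−k} − γ^k δ^{r−k})` is a rational integer. -/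
def IntCoeffs (α β γ δ : ℂ) (r : ℕ) : Prop :=
  ∀ k ≤ r, ∃ n : ℤ, (r.choose k : ℂ) * (α ^ k * β ^ (r - k) - γ ^ k * δ ^ (r - k)) = (n : ℂ)

/-- `(x,y)` is a primitive solution of the Thue inequality `0 < |F(x,y)| ≤ h`. -/
def IsPrimSol (α β γ δ : ℂ) (r h : ℕ) (x y : ℤ) : Prop :=
  Int.gcd x y = 1 ∧ 0 < ‖form α β γ δ r x y‖ ∧
    ‖form α β γ δ r x y‖ ≤ (h : ℝ)

/-- The solution `(x,y)` is related to the `r`-th root of unity `ω`: the principal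
argument of `(u/v)·ω⁻¹` lies in `(−π/r, π/r]`. -/
def RelatedTo (α β γ δ : ℂ) (r : ℕ) (ω : ℂ) (x y : ℤ) : Prop :=
  (lin α β x y / lin γ δ x y * ω⁻¹).arg ∈ Set.Ioc (-(Real.pi / r)) (Real.pi / r)

open ComplexConjugate

lemma norm_exp_mul_I_sub_exp_mul_I_le (a b : ℝ) :
    ‖exp (a * I) - exp (b * I)‖ ≤ |a - b| := by
  have h : exp (a * I) - exp (b * I) = exp (b * I) * (exp (I * ↑(a - b)) - 1) := by
    rw [mul_sub, ← Complex.exp_add]; push_cast; ring_nf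
  rw [h, norm_mul, norm_exp_ofReal_mul_I, one_mul, ← Real.norm_eq_abs]
  exact Real.norm_exp_I_mul_ofReal_sub_one_le

lemma mul_abs_le_norm_exp_mul_I_sub_one {x : ℝ} (hx : |x| ≤ Real.pi) :
    2 / Real.pi * |x| ≤ ‖exp (x * I) - 1‖ := by
  have hsin := Real.mul_abs_le_abs_sin (x := x / 2) (by rw [abs_div, abs_two]; linarith)
  rw [mul_comm (x : ℂ), norm_exp_I_mul_ofReal_sub_one, norm_mul, Real.norm_eq_abs, Real.norm_eq_abs,
    abs_two]
  rw [abs_div, abs_two] at hsin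
  linarith

lemma norm_sub_le_max_of_half_le_cos_arg_sub {p q : ℂ} (hp : p ≠ 0) (hq : q ≠ 0)
    (h : 1 / 2 ≤ Real.cos (p.arg - q.arg)) : ‖p - q‖ ≤ max ‖p‖ ‖q‖ := by
  have hp' := norm_pos_iff.2 hp
  have hq' := norm_pos_iff.2 hq
  rw [Real.cos_sub, cos_arg hp, cos_arg hq, sin_arg, sin_arg, div_mul_div_comm,
    div_mul_div_comm, ← add_div, le_div_iff₀ (by positivity)] at h
  have hsq : ‖p - q‖ ^ 2 ≤ max ‖p‖ ‖q‖ ^ 2 := by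
    rw [Complex.sq_norm, normSq_apply, sub_re, sub_im]
    have hp2 : ‖p‖ ^ 2 = p.re * p.re + p.im * p.im := by rw [Complex.sq_norm, normSq_apply]
    have hq2 : ‖q‖ ^ 2 = q.re * q.re + q.im * q.im := by rw [Complex.sq_norm, normSq_apply]
    rcases le_total ‖p‖ ‖q‖ with hpq | hpq
    · rw [max_eq_right hpq]; nlinarith
    · rw [max_eq_left hpq]; nlinarith
  exact le_of_pow_le_pow_left₀ two_ne_zero (by positivity) hsq

lemma arg_eq_zero_or_eq_pi_div_of_im_pow_eq_zero {g : ℂ} {r : ℕ} (hr : 0 < r)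
    (him : (g ^ r).im = 0) (harg : g.arg ∈ Set.Ioc (-(Real.pi / r)) (Real.pi / r)) :
    g.arg = 0 ∨ g.arg = Real.pi / r := by
  rcases eq_or_ne g 0 with rfl | hg
  · simp
  rcases eq_or_lt_of_le harg.2 with htop | hlt
  · exact Or.inr htop
  left
  have hr' : (0 : ℝ) < r := by exact_mod_cast hr
  have hpow : g ^ r = ((‖g‖ ^ r : ℝ) : ℂ) * exp ((r * g.arg : ℝ) * I) := by
    conv_lhs => rw [← norm_mul_exp_arg_mul_I g]
    rw [mul_pow, ← exp_nat_mul]; push_cast; ring_nf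
  rw [hpow, im_ofReal_mul, exp_ofReal_mul_I_im] at him
  have hsin : Real.sin (r * g.arg) = 0 :=
    (mul_eq_zero.1 him).resolve_left (pow_ne_zero _ (norm_ne_zero_iff.2 hg))
  have hlow : -Real.pi < r * g.arg := by
    have := mul_lt_mul_of_pos_left harg.1 hr'
    rwa [mul_neg, mul_div_cancel₀ _ hr'.ne'] at this
  have hhigh : r * g.arg < Real.pi := by
    have := mul_lt_mul_of_pos_left hlt hr'
    rwa [mul_div_cancel₀ _ hr'.ne'] at this
  rw [Real.sin_eq_zero_iff_of_lt_of_lt hlow hhigh] at hsin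
  exact (mul_eq_zero.1 hsin).resolve_left hr'.ne'

lemma eq_or_eq_neg_of_mul_eq_mul_of_gcd_eq_one {x₁ y₁ x₂ y₂ : ℤ} (h₁ : Int.gcd x₁ y₁ = 1)
    (h₂ : Int.gcd x₂ y₂ = 1) (h : x₁ * y₂ = x₂ * y₁) :
    (x₂, y₂) = (x₁, y₁) ∨ (x₂, y₂) = (-x₁, -y₁) := by
  obtain ⟨a, b, hab⟩ := Int.isCoprime_iff_gcd_eq_one.2 h₁
  -- Bézout: `a x₁ + b y₁ = 1` turns `x₁ y₂ = x₂ y₁` into `(x₂, y₂) = c • (x₁, y₁)`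
  set c := a * x₂ + b * y₂
  have hx : x₂ = c * x₁ := by linear_combination (-x₂) * hab - b * h
  have hy : y₂ = c * y₁ := by linear_combination (-y₂) * hab + a * h
  have hc : IsUnit c := (Int.isCoprime_iff_gcd_eq_one.2 h₂).isUnit_of_dvd'
    ⟨x₁, hx⟩ ⟨y₁, hy⟩
  rcases Int.isUnit_iff.1 hc with hc | hc <;> rw [hc] at hx hy <;> simp [hx, hy]

lemma lin_mul_lin_sub_lin_mul_lin (α β γ δ : ℂ) (x₁ y₁ x₂ y₂ : ℤ) :
    lin α β x₁ y₁ * lin γ δ x₂ y₂ - lin α β x₂ y₂ * lin γ δ x₁ y₁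
      = (α * δ - β * γ) * ((x₁ * y₂ - x₂ * y₁ : ℤ) : ℂ) := by
  simp only [lin]; push_cast; ring

lemma norm_det_le_norm_lin_mul_lin_sub {α β γ δ : ℂ} {x₁ y₁ x₂ y₂ : ℤ} (h₁ : Int.gcd x₁ y₁ = 1)
    (h₂ : Int.gcd x₂ y₂ = 1) (hne : (x₁, y₁) ≠ (x₂, y₂)) (hne' : (x₁, y₁) ≠ (-x₂, -y₂)) :
    ‖α * δ - β * γ‖ ≤ ‖lin α β x₁ y₁ * lin γ δ x₂ y₂ - lin α β x₂ y₂ * lin γ δ x₁ y₁‖ := by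
  have hdet : x₁ * y₂ - x₂ * y₁ ≠ 0 := by
    intro h0
    rcases eq_or_eq_neg_of_mul_eq_mul_of_gcd_eq_one h₁ h₂ (sub_eq_zero.1 h0) with h | h
    · exact hne h.symm
    · apply hne'; simp only [Prod.mk.injEq] at h ⊢; omega
  rw [lin_mul_lin_sub_lin_mul_lin, norm_mul]
  refine le_mul_of_one_le_right (norm_nonneg _) ?_
  rw [norm_intCast]
  exact_mod_cast Int.one_le_abs hdet

lemma Zmax_pow_le_of_half_le_zetaF {α β γ δ : ℂ} {r : ℕ} {x y : ℤ} {h : ℝ}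
    (hζ : 1 / 2 ≤ zetaF α β γ δ r x y) (hF : ‖form α β γ δ r x y‖ ≤ h) :
    Zmax α β γ δ x y ^ r ≤ 2 * h := by
  have hZ : 0 ≤ Zmax α β γ δ x y ^ r := pow_nonneg ((norm_nonneg _).trans (le_max_left _ _)) r
  rcases hZ.eq_or_lt with hZ | hZ
  · rw [← hZ]; linarith [norm_nonneg (form α β γ δ r x y)]
  · rw [zetaF, le_div_iff₀ hZ] at hζ
    linarith

lemma pow_geom_sum_mul_pow_le_of_step {a b : ℝ} {s n : ℕ} {Z : ℕ → ℝ} (ha : 0 ≤ a)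
    (hb : 0 ≤ b) (hZ : 0 ≤ Z 0) (hstep : ∀ k < n, a * Z k ^ s ≤ b * Z (k + 1)) :
    a ^ (∑ i ∈ Finset.range n, s ^ i) * Z 0 ^ s ^ n
      ≤ b ^ (∑ i ∈ Finset.range n, s ^ i) * Z n := by
  induction n with
  | zero => simp
  | succ n ih =>
    have ih := ih fun k hk => hstep k (by omega)
    set e := ∑ i ∈ Finset.range n, s ^ i
    calc a ^ (∑ i ∈ Finset.range (n + 1), s ^ i) * Z 0 ^ s ^ (n + 1)
        = a * (a ^ e * Z 0 ^ s ^ n) ^ s := by rw [geom_sum_succ, pow_succ s n]; ring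
      _ ≤ a * (b ^ e * Z n) ^ s := by gcongr
      _ = b ^ (s * e) * (a * Z n ^ s) := by ring
      _ ≤ b ^ (s * e) * (b * Z (n + 1)) :=
        mul_le_mul_of_nonneg_left (hstep n (by omega)) (by positivity)
      _ = b ^ (∑ i ∈ Finset.range (n + 1), s ^ i) * Z (n + 1) := by rw [geom_sum_succ]; ring

lemma pow_le_of_base_of_chain {A h Z₀ Z₁ Zₙ : ℝ} {r e R : ℕ} (hA : 0 ≤ A) (hh : 0 ≤ h)
    (hZ₁ : 0 ≤ Z₁) (hbase : A ≤ 2 * Z₀ * Z₁)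
    (hchain : A ^ e * Z₀ ^ R ≤ h ^ e * Zₙ) (hZ₁r : Z₁ ^ r ≤ 2 * h) (hZₙr : Zₙ ^ r ≤ 2 * h) :
    A ^ ((e + R) * r) ≤ 2 ^ (R * r + R + 1) * h ^ (e * r + R + 1) := by
  have h1 : A ^ (e + R) ≤ h ^ e * Zₙ * (2 * Z₁) ^ R :=
    calc A ^ (e + R) = A ^ e * A ^ R := pow_add _ _ _
      _ ≤ A ^ e * (2 * Z₀ * Z₁) ^ R := by gcongr
      _ = A ^ e * Z₀ ^ R * (2 * Z₁) ^ R := by ring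
      _ ≤ h ^ e * Zₙ * (2 * Z₁) ^ R := by gcongr
  calc A ^ ((e + R) * r) = (A ^ (e + R)) ^ r := pow_mul _ _ _
    _ ≤ (h ^ e * Zₙ * (2 * Z₁) ^ R) ^ r := by gcongr
    _ = h ^ (e * r) * 2 ^ (R * r) * Zₙ ^ r * (Z₁ ^ r) ^ R := by ring
    _ ≤ h ^ (e * r) * 2 ^ (R * r) * (2 * h) * (2 * h) ^ R := by gcongr
    _ = 2 ^ (R * r + R + 1) * h ^ (e * r + R + 1) := by ring

lemma pi_div_pow_le_two_pow {r e R : ℕ} (hr : 3 ≤ r) (he : 1 ≤ e) (hR : R = e * (r - 2) + 1) :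
    (Real.pi / r) ^ ((e + R) * r) ≤ 2 ^ (2 * e + r - 3) := by
  rcases eq_or_lt_of_le hr with rfl | hr4
  · have hπ : Real.pi / 3 ≤ 21 / 20 := by linarith [Real.pi_lt_d2]
    subst hR
    calc (Real.pi / ((3 : ℕ) : ℝ)) ^ ((e + (e * (3 - 2) + 1)) * 3)
        ≤ (Real.pi / 3) ^ (9 * e) := by
          rw [Nat.cast_ofNat]
          exact pow_le_pow_right₀ ((one_le_div₀ (by norm_num)).2 Real.pi_gt_three.le) (by omega)
      _ ≤ (21 / 20) ^ (9 * e) := by gcongr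
      _ ≤ 2 ^ (2 * e + 3 - 3) := by
          rw [pow_mul, Nat.add_sub_cancel, pow_mul]; gcongr; norm_num
  · have hr4' : (4 : ℝ) ≤ r := by exact_mod_cast hr4
    calc (Real.pi / r) ^ ((e + R) * r) ≤ 1 :=
          pow_le_one₀ (by positivity)
            ((div_le_one (by positivity)).2 (by linarith [Real.pi_le_four]))
      _ ≤ 2 ^ (2 * e + r - 3) := one_le_pow₀ (by norm_num)

lemma exponent_bounds_of_eq_mul_add_one {r e R : ℕ} (hr : 3 ≤ r) (he : 1 ≤ e)
    (hR : R = e * (r - 2) + 1) :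
    ((2 * e + r - 3 + (R * r + R + 1) : ℕ) : ℝ) / ((e + R) * r : ℕ)
        ≤ 1 + ((r : ℝ) - 2) / (r * ((R : ℝ) - 1)) ∧
      ((e * r + R + 1 : ℕ) : ℝ) / ((e + R) * r : ℕ) = 2 / r := by
  obtain ⟨s, rfl⟩ : ∃ s, r = s + 3 := ⟨r - 3, by omega⟩
  subst hR
  have he' : (1 : ℝ) ≤ e := by exact_mod_cast he
  simp only [show s + 3 - 2 = s + 1 by omega, show 2 * e + (s + 3) - 3 = 2 * e + s by omega]
  push_cast
  have he0 : (0 : ℝ) < e := by positivity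
  constructor
  · have key : 1 + ((s : ℝ) + 3 - 2) / ((s + 3) * ((e * (s + 1) + 1 : ℝ) - 1))
        - (2 * e + s + ((e * (s + 1) + 1) * (s + 3) + (e * (s + 1) + 1) + 1))
          / ((e + (e * (s + 1) + 1)) * (s + 3))
        = 1 / (e * ((e + (e * (s + 1) + 1)) * (s + 3))) := by
      field_simp
      ring
    have : (0 : ℝ) ≤ 1 / (e * ((e + (e * (s + 1) + 1)) * (s + 3))) := by positivity
    linarith
  · field_simp
    ring

lemma le_two_rpow_mul_rpow_of_pow_le {x h a b : ℝ} {N M K : ℕ} (hx : 0 ≤ x) (hh : 0 ≤ h)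
    (hN : N ≠ 0) (hpow : x ^ N ≤ 2 ^ M * h ^ K) (ha : (M : ℝ) / N ≤ a) (hb : (K : ℝ) / N = b) :
    x ≤ 2 ^ a * h ^ b := by
  calc x = (x ^ N) ^ (N⁻¹ : ℝ) := (Real.pow_rpow_inv_natCast hx hN).symm
    _ ≤ (2 ^ M * h ^ K) ^ (N⁻¹ : ℝ) := by gcongr
    _ = (2 : ℝ) ^ ((M : ℝ) / N) * h ^ ((K : ℝ) / N) := by
      rw [Real.mul_rpow (by positivity) (by positivity), ← Real.rpow_natCast,
        ← Real.rpow_natCast h, ← Real.rpow_mul (by norm_num), ← Real.rpow_mul hh, div_eq_mul_inv,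
        div_eq_mul_inv]
    _ ≤ 2 ^ a * h ^ b := by
      rw [hb]; gcongr; norm_num

lemma le_of_gap_principle {r n R : ℕ} (hr : 3 ≤ r) (hn : 1 ≤ n) (hR : R = (r - 1) ^ n)
    {J h : ℝ} (hJ : 0 ≤ J) (hh : 0 ≤ h) {Z : ℕ → ℝ} (hZ : ∀ k, 0 ≤ Z k)
    (hbase : r / Real.pi * J ≤ 2 * Z 0 * Z 1)
    (hstep : ∀ k < n, r / Real.pi * J * Z k ^ (r - 1) ≤ h * Z (k + 1))
    (hZ₁ : Z 1 ^ r ≤ 2 * h) (hZₙ : Z n ^ r ≤ 2 * h) :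
    J ≤ 2 ^ (1 + ((r : ℝ) - 2) / (r * ((R : ℝ) - 1))) * h ^ ((2 : ℝ) / r) := by
  set A := r / Real.pi * J
  set e := ∑ i ∈ Finset.range n, (r - 1) ^ i
  have he : 1 ≤ e := by
    simpa using Finset.single_le_sum (f := fun i => (r - 1) ^ i) (fun _ _ => Nat.zero_le _)
      (Finset.mem_range.2 hn)
  have heR : R = e * (r - 2) + 1 := by
    have := geom_sum_mul_add (r - 2) n
    rw [show r - 2 + 1 = r - 1 by omega] at this
    rw [hR, ← this]
  have hchain : A ^ e * Z 0 ^ R ≤ h ^ e * Z n :=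
    hR ▸ pow_geom_sum_mul_pow_le_of_step (by positivity) hh (hZ 0) hstep
  have hA := pow_le_of_base_of_chain (r := r) (by positivity) hh (hZ 1) hbase hchain hZ₁ hZₙ
  have hJpow : J ^ ((e + R) * r) ≤ 2 ^ (2 * e + r - 3 + (R * r + R + 1)) * h ^ (e * r + R + 1) :=
    calc J ^ ((e + R) * r) = (Real.pi / r) ^ ((e + R) * r) * A ^ ((e + R) * r) := by
          rw [← mul_pow]; congr 1; simp only [A]; field_simp
      _ ≤ 2 ^ (2 * e + r - 3) * (2 ^ (R * r + R + 1) * h ^ (e * r + R + 1)) := by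
          gcongr
          exact pi_div_pow_le_two_pow hr he heR
      _ = _ := by ring
  obtain ⟨hM, hK⟩ := exponent_bounds_of_eq_mul_add_one hr he heR
  exact le_two_rpow_mul_rpow_of_pow_le hJ hh (by positivity) hJpow hM hK

lemma lin_conj (α β : ℂ) (x y : ℤ) : lin (conj α) (conj β) x y = conj (lin α β x y) := by
  simp [lin]

lemma eq_exp_arg_mul_I_mul_conj {ω u : ℂ} (hω : ‖ω‖ = 1) (hu : u ≠ 0) :
    u = exp ((u / conj u * ω⁻¹).arg * I) * ω * conj u := by
  have hω0 : ω ≠ 0 := norm_ne_zero_iff.1 (by rw [hω]; exact one_ne_zero)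
  have hnorm : ‖u / conj u * ω⁻¹‖ = 1 := by
    rw [norm_mul, norm_div, norm_conj, norm_inv, hω, div_self (norm_ne_zero_iff.2 hu)]
    norm_num
  have := norm_mul_exp_arg_mul_I (u / conj u * ω⁻¹)
  rw [hnorm, ofReal_one, one_mul] at this
  rw [this]
  field_simp [(map_ne_zero conj).2 hu]

lemma mul_abs_arg_le_norm_pow_sub_conj_pow {r : ℕ} (hr : 0 < r) {ω u : ℂ} (hω : ω ^ r = 1)
    (hu : u ≠ 0) (harg : (u / conj u * ω⁻¹).arg ∈ Set.Ioc (-(Real.pi / r)) (Real.pi / r)) :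
    2 * r / Real.pi * |(u / conj u * ω⁻¹).arg| ≤ ‖u ^ r - conj u ^ r‖ / ‖u‖ ^ r := by
  set θ := (u / conj u * ω⁻¹).arg
  have hr' : (0 : ℝ) < r := by exact_mod_cast hr
  have hpow : u ^ r = exp ((r * θ : ℝ) * I) * conj u ^ r := by
    conv_lhs => rw [eq_exp_arg_mul_I_mul_conj (norm_eq_one_of_pow_eq_one hω hr.ne') hu]
    rw [mul_pow, mul_pow, hω, mul_one, ← exp_nat_mul]
    congr 2
    push_cast
    ring
  have hrθ : |r * θ| ≤ Real.pi := by
    rw [abs_mul, Nat.abs_cast, ← le_div_iff₀' hr', abs_le]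
    exact ⟨harg.1.le, harg.2⟩
  rw [hpow, ← sub_one_mul, norm_mul, norm_pow, norm_conj,
    mul_div_cancel_right₀ _ (by positivity)]
  calc 2 * r / Real.pi * |θ| = 2 / Real.pi * |r * θ| := by
        rw [abs_mul, Nat.abs_cast]; ring
    _ ≤ _ := mul_abs_le_norm_exp_mul_I_sub_one hrθ

lemma norm_mul_conj_sub_mul_conj_le {ω u₀ u₁ : ℂ} (hω : ‖ω‖ = 1) (hu₀ : u₀ ≠ 0) (hu₁ : u₁ ≠ 0) :
    ‖u₀ * conj u₁ - u₁ * conj u₀‖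
      ≤ ‖u₀‖ * ‖u₁‖ * (|(u₀ / conj u₀ * ω⁻¹).arg| + |(u₁ / conj u₁ * ω⁻¹).arg|) := by
  set θ₀ := (u₀ / conj u₀ * ω⁻¹).arg
  set θ₁ := (u₁ / conj u₁ * ω⁻¹).arg
  have h₀ := eq_exp_arg_mul_I_mul_conj hω hu₀
  have h₁ := eq_exp_arg_mul_I_mul_conj hω hu₁
  have hdiff : u₀ * conj u₁ - u₁ * conj u₀
      = (exp (θ₀ * I) - exp (θ₁ * I)) * (ω * conj u₀ * conj u₁) := by
    linear_combination conj u₁ * h₀ - conj u₀ * h₁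
  rw [hdiff, norm_mul, norm_mul, norm_mul, norm_conj, norm_conj, hω, one_mul, mul_comm]
  gcongr
  exact (norm_exp_mul_I_sub_exp_mul_I_le θ₀ θ₁).trans (abs_sub _ _)

lemma gap_base_of_conj {r : ℕ} (hr : 0 < r) {ω u₀ u₁ : ℂ} {J : ℝ} (hω : ‖ω‖ = 1)
    (hu₀ : u₀ ≠ 0) (hu₁ : u₁ ≠ 0)
    (harg₀ : (u₀ / conj u₀ * ω⁻¹).arg ∈ Set.Ioc (-(Real.pi / r)) (Real.pi / r))
    (harg₁ : (u₁ / conj u₁ * ω⁻¹).arg ∈ Set.Ioc (-(Real.pi / r)) (Real.pi / r))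
    (hJ : J ≤ ‖u₀ * conj u₁ - u₁ * conj u₀‖) :
    r / Real.pi * J ≤ 2 * ‖u₀‖ * ‖u₁‖ := by
  have hpair := hJ.trans (norm_mul_conj_sub_mul_conj_le hω hu₀ hu₁)
  have hr' : (0 : ℝ) < r := by exact_mod_cast hr
  calc r / Real.pi * J
      ≤ r / Real.pi * (‖u₀‖ * ‖u₁‖ * (Real.pi / r + Real.pi / r)) := by
        gcongr
        refine hpair.trans ?_
        gcongr
        exacts [abs_le.2 ⟨harg₀.1.le, harg₀.2⟩, abs_le.2 ⟨harg₁.1.le, harg₁.2⟩]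
    _ = 2 * ‖u₀‖ * ‖u₁‖ := by field_simp; ring

lemma gap_step_of_conj {r : ℕ} (hr : 0 < r) {ω u₀ u₁ : ℂ} {J h : ℝ} (hω : ω ^ r = 1)
    (hu₀ : u₀ ≠ 0) (hu₁ : u₁ ≠ 0)
    (harg₀ : (u₀ / conj u₀ * ω⁻¹).arg ∈ Set.Ioc (-(Real.pi / r)) (Real.pi / r))
    (harg₁ : (u₁ / conj u₁ * ω⁻¹).arg ∈ Set.Ioc (-(Real.pi / r)) (Real.pi / r))
    (hJ : J ≤ ‖u₀ * conj u₁ - u₁ * conj u₀‖)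
    (hζ : ‖u₁ ^ r - conj u₁ ^ r‖ / ‖u₁‖ ^ r ≤ ‖u₀ ^ r - conj u₀ ^ r‖ / ‖u₀‖ ^ r)
    (hF : ‖u₀ ^ r - conj u₀ ^ r‖ ≤ h) :
    r / Real.pi * J * ‖u₀‖ ^ (r - 1) ≤ h * ‖u₁‖ := by
  have hpair :=
    hJ.trans (norm_mul_conj_sub_mul_conj_le (norm_eq_one_of_pow_eq_one hω hr.ne') hu₀ hu₁)
  have h₀ := mul_abs_arg_le_norm_pow_sub_conj_pow hr hω hu₀ harg₀
  have h₁ := mul_abs_arg_le_norm_pow_sub_conj_pow hr hω hu₁ harg₁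
  set θ₀ := (u₀ / conj u₀ * ω⁻¹).arg
  set θ₁ := (u₁ / conj u₁ * ω⁻¹).arg
  set ζ₀ := ‖u₀ ^ r - conj u₀ ^ r‖ / ‖u₀‖ ^ r
  have hJζ : r / Real.pi * J ≤ ‖u₀‖ * ‖u₁‖ * ζ₀ :=
    calc r / Real.pi * J ≤ r / Real.pi * (‖u₀‖ * ‖u₁‖ * (|θ₀| + |θ₁|)) := by gcongr
      _ = ‖u₀‖ * ‖u₁‖ * ((2 * r / Real.pi * |θ₀| + 2 * r / Real.pi * |θ₁|) / 2) := by ring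
      _ ≤ ‖u₀‖ * ‖u₁‖ * ζ₀ := by gcongr; linarith
  calc r / Real.pi * J * ‖u₀‖ ^ (r - 1) ≤ ‖u₀‖ * ‖u₁‖ * ζ₀ * ‖u₀‖ ^ (r - 1) := by gcongr
    _ = ‖u₁‖ * (ζ₀ * (‖u₀‖ * ‖u₀‖ ^ (r - 1))) := by ring
    _ = ‖u₁‖ * ‖u₀ ^ r - conj u₀ ^ r‖ := by
      rw [mul_pow_sub_one hr.ne', div_mul_cancel₀ _ (by positivity)]
    _ ≤ h * ‖u₁‖ := by rw [mul_comm]; gcongr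

lemma norm_le_of_conj_of_half_le_zetaF {α β ω : ℂ} {r h n R : ℕ} {J : ℝ} (hr : 3 ≤ r) (hn : 1 ≤ n)
    (hR : R = (r - 1) ^ n) (hω : ω ^ r = 1) (hJ0 : 0 ≤ J) {s : ℕ → ℤ × ℤ}
    (hsol : ∀ k, IsPrimSol α β (conj α) (conj β) r h (s k).1 (s k).2)
    (hrel : ∀ k, RelatedTo α β (conj α) (conj β) r ω (s k).1 (s k).2)
    (hζ : ∀ k ≤ n, 1 / 2 ≤ zetaF α β (conj α) (conj β) r (s k).1 (s k).2)
    (hord : ∀ k < n, zetaF α β (conj α) (conj β) r (s (k + 1)).1 (s (k + 1)).2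
      ≤ zetaF α β (conj α) (conj β) r (s k).1 (s k).2)
    (hJ : ∀ k < n, J ≤ ‖lin α β (s k).1 (s k).2 * lin (conj α) (conj β) (s (k + 1)).1 (s (k + 1)).2
      - lin α β (s (k + 1)).1 (s (k + 1)).2 * lin (conj α) (conj β) (s k).1 (s k).2‖) :
    J ≤ 2 ^ (1 + ((r : ℝ) - 2) / (r * ((R : ℝ) - 1))) * (h : ℝ) ^ ((2 : ℝ) / r) := by
  have hr0 : 0 < r := by omega
  have hZ : ∀ k ≤ n, Zmax α β (conj α) (conj β) (s k).1 (s k).2 ^ r ≤ 2 * h :=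
    fun k hk => Zmax_pow_le_of_half_le_zetaF (hζ k hk) (hsol k).2.2
  simp only [IsPrimSol, RelatedTo, zetaF, Zmax, form, lin_conj, norm_conj, max_self]
    at hsol hrel hord hJ hZ
  have hu : ∀ k, lin α β (s k).1 (s k).2 ≠ 0 := fun k hu0 => by
    simpa [hu0, zero_pow hr0.ne'] using (hsol k).2.1
  refine le_of_gap_principle hr hn hR hJ0 (Nat.cast_nonneg h)
    (Z := fun k => ‖lin α β (s k).1 (s k).2‖) (fun k => norm_nonneg _) ?_
    (fun k hk => gap_step_of_conj hr0 hω (hu k) (hu (k + 1)) (hrel k) (hrel (k + 1)) (hJ k hk)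
      (hord k hk) (hsol k).2.2) (hZ 1 hn) (hZ n le_rfl)
  exact gap_base_of_conj hr0 (norm_eq_one_of_pow_eq_one hω hr0.ne') (hu 0) (hu 1) (hrel 0) (hrel 1)
    (hJ 0 hn)

lemma im_pow_div_mul_inv_eq_zero {r : ℕ} {ω u v : ℂ} (hω : ω ^ r = 1)
    (hμ : (v ^ r / u ^ r).im = 0) : ((u / v * ω⁻¹) ^ r).im = 0 := by
  rw [mul_pow, div_pow, inv_pow, hω, inv_one, mul_one, ← inv_div, inv_im, hμ, neg_zero,
    zero_div]

lemma half_le_cos_sub_of_eq_zero_or_eq_pi_div {r : ℕ} (hr : 3 ≤ r) {a b : ℝ}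
    (ha : a = 0 ∨ a = Real.pi / r) (hb : b = 0 ∨ b = Real.pi / r) : 1 / 2 ≤ Real.cos (a - b) := by
  have hcos : 1 / 2 ≤ Real.cos (Real.pi / r) := by
    rw [← Real.cos_pi_div_three]
    apply Real.cos_le_cos_of_nonneg_of_le_pi (by positivity) (by linarith [Real.pi_pos])
    exact div_le_div_of_nonneg_left Real.pi_pos.le (by norm_num) (by exact_mod_cast hr)
  rcases ha with rfl | rfl <;> rcases hb with rfl | rfl <;>
    simp only [sub_self, zero_sub, sub_zero, Real.cos_zero, Real.cos_neg] <;> linarith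

lemma norm_mul_sub_mul_le_of_im_eq_zero {r : ℕ} (hr : 3 ≤ r) {ω : ℂ} (hω : ω ^ r = 1)
    {u₀ v₀ u₁ v₁ : ℂ} (hu₀ : u₀ ≠ 0) (hv₀ : v₀ ≠ 0) (hu₁ : u₁ ≠ 0) (hv₁ : v₁ ≠ 0)
    (hμ₀ : (v₀ ^ r / u₀ ^ r).im = 0) (hμ₁ : (v₁ ^ r / u₁ ^ r).im = 0)
    (harg₀ : (u₀ / v₀ * ω⁻¹).arg ∈ Set.Ioc (-(Real.pi / r)) (Real.pi / r))
    (harg₁ : (u₁ / v₁ * ω⁻¹).arg ∈ Set.Ioc (-(Real.pi / r)) (Real.pi / r)) :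
    ‖u₀ * v₁ - u₁ * v₀‖ ≤ max ‖u₀‖ ‖v₀‖ * max ‖u₁‖ ‖v₁‖ := by
  have hr0 : 0 < r := by omega
  have hω0 : ω ≠ 0 := by rintro rfl; simp [zero_pow hr0.ne'] at hω
  set g₀ := u₀ / v₀ * ω⁻¹
  set g₁ := u₁ / v₁ * ω⁻¹
  set c := ω * (v₀ * v₁)
  have hg₀c : g₀ * c = u₀ * v₁ := by simp only [g₀, c]; field_simp
  have hg₁c : g₁ * c = u₁ * v₀ := by simp only [g₁, c]; field_simp
  have hg : ‖g₀ - g₁‖ ≤ max ‖g₀‖ ‖g₁‖ :=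
    norm_sub_le_max_of_half_le_cos_arg_sub (by positivity) (by positivity) <|
      half_le_cos_sub_of_eq_zero_or_eq_pi_div hr
        (arg_eq_zero_or_eq_pi_div_of_im_pow_eq_zero hr0 (im_pow_div_mul_inv_eq_zero hω hμ₀) harg₀)
        (arg_eq_zero_or_eq_pi_div_of_im_pow_eq_zero hr0 (im_pow_div_mul_inv_eq_zero hω hμ₁) harg₁)
  calc ‖u₀ * v₁ - u₁ * v₀‖ = ‖g₀ - g₁‖ * ‖c‖ := by rw [← hg₀c, ← hg₁c, ← sub_mul, norm_mul]
    _ ≤ max ‖g₀‖ ‖g₁‖ * ‖c‖ := by gcongr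
    _ = max (‖u₀‖ * ‖v₁‖) (‖u₁‖ * ‖v₀‖) := by
      rw [max_mul_of_nonneg _ _ (norm_nonneg c), ← norm_mul, ← norm_mul, hg₀c, hg₁c, norm_mul,
        norm_mul]
    _ ≤ max ‖u₀‖ ‖v₀‖ * max ‖u₁‖ ‖v₁‖ := by
      rw [mul_comm ‖u₁‖]
      exact max_le (mul_le_mul (le_max_left _ _) (le_max_right _ _) (by positivity) (by positivity))
        (mul_le_mul (le_max_right _ _) (le_max_left _ _) (by positivity) (by positivity))

lemma norm_le_of_im_muF_eq_zero {α β γ δ ω : ℂ} {r h R : ℕ} (hr : 3 ≤ r) (hR : 1 ≤ R)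
    (hω : ω ^ r = 1) {x₀ y₀ x₁ y₁ : ℤ}
    (hsol₀ : IsPrimSol α β γ δ r h x₀ y₀) (hsol₁ : IsPrimSol α β γ δ r h x₁ y₁)
    (hrel₀ : RelatedTo α β γ δ r ω x₀ y₀) (hrel₁ : RelatedTo α β γ δ r ω x₁ y₁)
    (hζ₀ : 1 / 2 ≤ zetaF α β γ δ r x₀ y₀) (hζ₁ : 1 / 2 ≤ zetaF α β γ δ r x₁ y₁)
    (hμ₀ : lin α β x₀ y₀ ≠ 0 ∧ lin γ δ x₀ y₀ ≠ 0 ∧ (muF α β γ δ r x₀ y₀).im = 0)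
    (hμ₁ : lin α β x₁ y₁ ≠ 0 ∧ lin γ δ x₁ y₁ ≠ 0 ∧ (muF α β γ δ r x₁ y₁).im = 0) :
    ‖lin α β x₀ y₀ * lin γ δ x₁ y₁ - lin α β x₁ y₁ * lin γ δ x₀ y₀‖
      ≤ 2 ^ (1 + ((r : ℝ) - 2) / (r * ((R : ℝ) - 1))) * (h : ℝ) ^ ((2 : ℝ) / r) := by
  have hZ₀ := Zmax_pow_le_of_half_le_zetaF hζ₀ hsol₀.2.2
  have hZ₁ := Zmax_pow_le_of_half_le_zetaF hζ₁ hsol₁.2.2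
  have hpair := norm_mul_sub_mul_le_of_im_eq_zero hr hω hμ₀.1 hμ₀.2.1 hμ₁.1 hμ₁.2.1 hμ₀.2.2
    hμ₁.2.2 hrel₀ hrel₁
  have hpow : ‖lin α β x₀ y₀ * lin γ δ x₁ y₁ - lin α β x₁ y₁ * lin γ δ x₀ y₀‖ ^ r
      ≤ 2 ^ 2 * (h : ℝ) ^ 2 :=
    calc _ ≤ (Zmax α β γ δ x₀ y₀ * Zmax α β γ δ x₁ y₁) ^ r := by gcongr; exact hpair
      _ = Zmax α β γ δ x₀ y₀ ^ r * Zmax α β γ δ x₁ y₁ ^ r := mul_pow _ _ _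
      _ ≤ (2 * h) * (2 * h) := by gcongr; exact (pow_nonneg (le_max_of_le_left (norm_nonneg _)) _)
      _ = 2 ^ 2 * (h : ℝ) ^ 2 := by ring
  refine le_two_rpow_mul_rpow_of_pow_le (norm_nonneg _) (Nat.cast_nonneg h) (by omega) hpow ?_
    (by push_cast; rfl)
  have hr' : (3 : ℝ) ≤ r := by exact_mod_cast hr
  have hR' : (1 : ℝ) ≤ R := by exact_mod_cast hR
  have hε : 0 ≤ ((r : ℝ) - 2) / (r * ((R : ℝ) - 1)) := by
    apply div_nonneg <;> nlinarith
  rw [div_le_iff₀ (by positivity)]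
  push_cast
  nlinarith

/-- Let `r ≥ 3`, `t ≥ 3`, and let `(x_1,y_1), …, (x_t,y_t)` be primitive
solutions of `0 < |F| ≤ h`, pairwise distinct up to sign, all related to the same `r`-th
root of unity `ω`, ordered so that `ζ_1 ≥ ζ_2 ≥ … ≥ ζ_t`. Assume either (a) `γ = conj α`
and `δ = conj β` (`D < 0`), or (b) `u_i, v_i ≠ 0` and `μ_i` real for all `i` (`D > 0`).
If `|j| > 2^{1+(r−2)/(r(R−1))}·h^{2/r}` where `R = (r−1)^{t−2}`, then `ζ_{t−1} < 1/2`. -/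
theorem iteration_zeta_small (r h t : ℕ) (hr : 3 ≤ r) (ht : 3 ≤ t)
    (α β γ δ j : ℂ) (hj : j = α * δ - β * γ)
    (sol : Fin t → ℤ × ℤ)
    (hsol : ∀ i, IsPrimSol α β γ δ r h (sol i).1 (sol i).2)
    (hdist : ∀ i k : Fin t, i ≠ k →
      sol i ≠ sol k ∧ sol i ≠ (-(sol k).1, -(sol k).2))
    (ω : ℂ) (hω : ω ^ r = 1)
    (hrel : ∀ i, RelatedTo α β γ δ r ω (sol i).1 (sol i).2)
    (hord : ∀ i k : Fin t, i ≤ k →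
      zetaF α β γ δ r (sol k).1 (sol k).2 ≤ zetaF α β γ δ r (sol i).1 (sol i).2)
    (hcase : (γ = (starRingEnd ℂ) α ∧ δ = (starRingEnd ℂ) β) ∨
      (∀ i, lin α β (sol i).1 (sol i).2 ≠ 0 ∧ lin γ δ (sol i).1 (sol i).2 ≠ 0 ∧
        (muF α β γ δ r (sol i).1 (sol i).2).im = 0))
    (R : ℕ) (hR : R = (r - 1) ^ (t - 2))
    (hjbig : (2 : ℝ) ^ (1 + ((r : ℝ) - 2) / ((r : ℝ) * ((R : ℝ) - 1))) *
        (h : ℝ) ^ ((2 : ℝ) / r) < ‖j‖) :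
    zetaF α β γ δ r (sol ⟨t - 2, by omega⟩).1 (sol ⟨t - 2, by omega⟩).2 < 1 / 2 := by
  by_contra! hζ
  set idx : ℕ → Fin t := fun k => ⟨min k (t - 1), by omega⟩
  set s : ℕ → ℤ × ℤ := fun k => sol (idx k)
  have hζs : ∀ k ≤ t - 2, 1 / 2 ≤ zetaF α β γ δ r (s k).1 (s k).2 := fun k hk =>
    hζ.trans (hord _ _ (Fin.mk_le_mk.2 (by omega)))
  have hords : ∀ k < t - 2,
      zetaF α β γ δ r (s (k + 1)).1 (s (k + 1)).2 ≤ zetaF α β γ δ r (s k).1 (s k).2 :=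
    fun k _ => hord _ _ (Fin.mk_le_mk.2 (by omega))
  have hJ : ∀ k < t - 2, ‖j‖ ≤ ‖lin α β (s k).1 (s k).2 * lin γ δ (s (k + 1)).1 (s (k + 1)).2
      - lin α β (s (k + 1)).1 (s (k + 1)).2 * lin γ δ (s k).1 (s k).2‖ := fun k hk => by
    obtain ⟨hne, hne'⟩ :=
      hdist (idx k) (idx (k + 1)) (by simp only [idx, ne_eq, Fin.mk.injEq]; omega)
    exact hj ▸ norm_det_le_norm_lin_mul_lin_sub (hsol _).1 (hsol _).1 hne hne'
  rcases hcase with ⟨rfl, rfl⟩ | hμ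
  · exact (norm_le_of_conj_of_half_le_zetaF hr (by omega) hR hω (norm_nonneg j)
      (fun _ => hsol _) (fun _ => hrel _) hζs hords hJ).not_gt hjbig
  · have hR1 : 1 ≤ R := hR ▸ Nat.one_le_pow _ _ (by omega)
    exact ((hJ 0 (by omega)).trans (norm_le_of_im_muF_eq_zero hr hR1 hω (hsol _) (hsol _)
      (hrel _) (hrel _) (hζs 0 (by omega)) (hζs 1 (by omega)) (hμ _) (hμ _))).not_gt hjbig
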